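/- Let V be a nonzero vertex algebra such that C_2(V) = V. Then there does not exist a lower truncated ℤ-grading V = ⊕_{n∈ℤ} V_(n) with which V becomes a ℤ-graded vertex algebra. -/
import Mathlib


open scoped DirectSum

noncomputable section


/-- Integer binomial coefficient `C(m, i)` for `m : ℤ`, `i : ℕ`. -/
def intBinom (m : ℤ) (i : ℕ) : ℤ :=
  (∏ j ∈ Finset.range i, (m - (j : ℤ))) / (i.factorial : ℤ)

/-- A vertex algebra over `ℂ`: a complex vector space `V` with a vacuum vector and a
linear state-field correspondence `Y`, `Y(v,x) = ∑ₙ vₙ x^{-n-1}`, satisfying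
truncation, vacuum and creation properties, and Borcherds' commutator and
iterate formulas. -/
structure VertexAlgebra (V : Type*) [AddCommGroup V] [Module ℂ V] where
  /-- the coefficients of vertex operators: `Y u n v = uₙ v`. -/
  Y : V →ₗ[ℂ] ℤ → Module.End ℂ V
  /-- the vacuum vector `𝟏`. -/
  vac : V
  trunc : ∀ u v : V, ∃ N : ℕ, ∀ n : ℤ, (N : ℤ) ≤ n → Y u n v = 0
  vac_act : ∀ (n : ℤ) (v : V), Y vac n v = if n = -1 then v else 0
  create : ∀ u : V, Y u (-1) vac = u
  create_nonneg : ∀ (u : V) (n : ℤ), 0 ≤ n → Y u n vac = 0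
  commutator : ∀ (u v w : V) (m n : ℤ),
    Y u m (Y v n w) - Y v n (Y u m w)
      = ∑ᶠ i : ℕ, intBinom m i • Y (Y u i v) (m + n - i) w
  iterate : ∀ (u v w : V) (m n : ℤ),
    Y (Y u m v) n w
      = ∑ᶠ i : ℕ, ((-1 : ℤ) ^ i * intBinom m i) •
          (Y u (m - i) (Y v (n + i) w)
            - ((((-1 : ℤˣ) ^ m : ℤˣ) : ℤ) • Y v (m + n - i) (Y u i w)))

/-- A module for a vertex algebra. -/
structure VAModule {V : Type*} [AddCommGroup V] [Module ℂ V] (va : VertexAlgebra V)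
    (W : Type*) [AddCommGroup W] [Module ℂ W] where
  /-- the action `act v n w = vₙ w`. -/
  act : V →ₗ[ℂ] ℤ → Module.End ℂ W
  trunc : ∀ (v : V) (w : W), ∃ N : ℕ, ∀ n : ℤ, (N : ℤ) ≤ n → act v n w = 0
  vac_act : ∀ (n : ℤ) (w : W), act va.vac n w = if n = -1 then w else 0
  commutator : ∀ (u v : V) (w : W) (m n : ℤ),
    act u m (act v n w) - act v n (act u m w)
      = ∑ᶠ i : ℕ, intBinom m i • act (va.Y u i v) (m + n - i) w
  iterate : ∀ (u v : V) (w : W) (m n : ℤ),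
    act (va.Y u m v) n w
      = ∑ᶠ i : ℕ, ((-1 : ℤ) ^ i * intBinom m i) •
          (act u (m - i) (act v (n + i) w)
            - ((((-1 : ℤˣ) ^ m : ℤˣ) : ℤ) • act v (m + n - i) (act u i w)))

variable {V : Type*} [AddCommGroup V] [Module ℂ V]

/-- The adjoint module of a vertex algebra. -/
def VertexAlgebra.adjoint (va : VertexAlgebra V) : VAModule va V where
  act := va.Y
  trunc := va.trunc
  vac_act := va.vac_act
  commutator := va.commutator
  iterate := va.iterate

variable {W : Type*} [AddCommGroup W] [Module ℂ W]

/-- `Efilt M n = E_n(W)`: the subspace of `W` spanned by the vectors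
`u⁽¹⁾_{-1-k₁} ⋯ u⁽ʳ⁾_{-1-k_r} w` for `r ≥ 1`, `u⁽ⁱ⁾ ∈ V`, `w ∈ W`, `kᵢ ≥ 0`,
`k₁ + ⋯ + k_r ≥ n`. -/
def Efilt {va : VertexAlgebra V} (M : VAModule va W) (n : ℤ) : Submodule ℂ W :=
  Submodule.span ℂ {x : W | ∃ (L : List (V × ℕ)) (w : W), L ≠ [] ∧
    n ≤ (L.map fun p => ((p.2 : ℤ))).sum ∧
    x = L.foldr (fun p acc => M.act p.1 (-1 - (p.2 : ℤ)) acc) w}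

/-- `Cfilt M n = C_n(W)`: the subspace of `W` spanned by the vectors `v_{-n} w`. -/
def Cfilt {va : VertexAlgebra V} (M : VAModule va W) (n : ℕ) : Submodule ℂ W :=
  Submodule.span ℂ {x : W | ∃ (v : V) (w : W), x = M.act v (-(n : ℤ)) w}
section Aux

variable {V : Type*} [AddCommGroup V] [Module ℂ V] (va : VertexAlgebra V)

lemma intBinom_zero (m : ℤ) : intBinom m 0 = 1 := by simp [intBinom]

lemma intBinom_one (m : ℤ) : intBinom m 1 = m := by simp [intBinom]

lemma intBinom_neg_two (i : ℕ) : intBinom (-2) i = (-1) ^ i * (i + 1) := by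
  have h : (∏ j ∈ Finset.range i, ((-2 : ℤ) - (j : ℤ))) = (-1) ^ i * ((i+1).factorial : ℤ) := by
    induction i with
    | zero => simp
    | succ k ih =>
      rw [Finset.prod_range_succ, ih]
      have : ((-2 : ℤ) - (k : ℤ)) = (-1) * ((k : ℤ) + 2) := by ring
      rw [this]
      rw [show (k+1+1).factorial = (k+2) * (k+1).factorial from rfl]
      push_cast
      ring
  rw [intBinom, h]
  rw [show ((i+1).factorial : ℤ) = (i+1) * (i.factorial : ℤ) by
    rw [Nat.factorial_succ]; push_cast; ring]
  rw [show (-1 : ℤ) ^ i * ((i+1) * (i.factorial : ℤ)) = ((-1) ^ i * (i+1)) * (i.factorial : ℤ) by ring]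
  exact Int.mul_ediv_cancel _ (by exact_mod_cast (Nat.factorial_pos i).ne')

lemma sign_even {m : ℤ} (h : Even m) : ((((-1 : ℤˣ) ^ m : ℤˣ)) : ℤ) = 1 := by
  rw [h.neg_one_zpow]; rfl

/-- Splitting a `finsum` into an initial finite part plus a remainder lying in a submodule. -/
lemma finsum_split {f : ℕ → V} (p : Submodule ℂ V) (k : ℕ)
    (hN : ∃ N : ℕ, ∀ i, N ≤ i → f i = 0)
    (h : ∀ i, k ≤ i → f i ∈ p) :
    (∑ᶠ i, f i) - ∑ i ∈ Finset.range k, f i ∈ p := by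
  obtain ⟨N, hNf⟩ := hN
  have hsub : Function.support f ⊆ (Finset.range (max N k) : Set ℕ) := by
    intro i hi
    simp only [Finset.coe_range, Set.mem_Iio]
    by_contra hc
    exact hi (hNf i (le_trans (le_max_left _ _) (le_of_not_gt hc)))
  rw [finsum_eq_sum_of_support_subset f hsub]
  have hks : Finset.range k ⊆ Finset.range (max N k) :=
    Finset.range_subset_range.2 (le_max_right _ _)
  rw [← Finset.sum_sdiff hks, add_sub_cancel_right]
  refine Submodule.sum_mem _ ?_
  intro i hi
  rw [Finset.mem_sdiff, Finset.mem_range, Finset.mem_range] at hi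
  exact h i (le_of_not_gt fun hlt => hi.2 hlt)

end Aux
section Aux2

variable {V : Type*} [AddCommGroup V] [Module ℂ V] (va : VertexAlgebra V)

lemma zsmul_mem' {p : Submodule ℂ V} (z : ℤ) {x : V} (hx : x ∈ p) : z • x ∈ p := by
  rw [← Int.cast_smul_eq_zsmul ℂ]; exact p.smul_mem _ hx

lemma iterate_split (u v w : V) (m n : ℤ) (p : Submodule ℂ V) (k : ℕ)
    (h : ∀ i : ℕ, k ≤ i → ((-1 : ℤ) ^ i * intBinom m i) •
          (va.Y u (m - i) (va.Y v (n + i) w)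
            - ((((-1 : ℤˣ) ^ m : ℤˣ) : ℤ) • va.Y v (m + n - i) (va.Y u i w))) ∈ p) :
    va.Y (va.Y u m v) n w - ∑ i ∈ Finset.range k, ((-1 : ℤ) ^ i * intBinom m i) •
          (va.Y u (m - i) (va.Y v (n + i) w)
            - ((((-1 : ℤˣ) ^ m : ℤˣ) : ℤ) • va.Y v (m + n - i) (va.Y u i w))) ∈ p := by
  rw [va.iterate]
  refine finsum_split p k ?_ h
  obtain ⟨N₁, h₁⟩ := va.trunc v w
  obtain ⟨N₂, h₂⟩ := va.trunc u w
  refine ⟨N₁ + n.natAbs + N₂, fun i hi => ?_⟩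
  have hv : va.Y v (n + i) w = 0 := h₁ _ (by omega)
  have hu : va.Y u i w = 0 := h₂ _ (by omega)
  rw [hv, hu]
  simp

lemma commutator_split (u v w : V) (m n : ℤ) (p : Submodule ℂ V) (k : ℕ)
    (h : ∀ i : ℕ, k ≤ i → intBinom m i • va.Y (va.Y u i v) (m + n - i) w ∈ p) :
    (va.Y u m (va.Y v n w) - va.Y v n (va.Y u m w))
      - ∑ i ∈ Finset.range k, intBinom m i • va.Y (va.Y u i v) (m + n - i) w ∈ p := by
  rw [va.commutator]
  refine finsum_split p k ?_ h
  obtain ⟨N, hN⟩ := va.trunc u v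
  exact ⟨N, fun i hi => by rw [hN i (by exact_mod_cast hi)]; simp⟩

/-- The operator `D : v ↦ v_{-2} 𝟏`. -/
def Dop (z : V) : V := va.Y z (-2) va.vac

/-- The image of `D`, as (the span of) a subspace. -/
def DVsub : Submodule ℂ V := Submodule.span ℂ {x : V | ∃ z, x = Dop va z}

lemma Dop_mem_DV (z : V) : Dop va z ∈ DVsub va := Submodule.subset_span ⟨z, rfl⟩

lemma Dop_vac : Dop va va.vac = 0 := by
  rw [Dop, va.vac_act]; simp

lemma sign_neg_two : ((((-1 : ℤˣ) ^ (-2 : ℤ) : ℤˣ)) : ℤ) = 1 :=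
  sign_even ⟨-1, by norm_num⟩

/-- `D(z_m w) = z_m (D w) - m z_{m-1} w`. -/
lemma Dop_Y (z w : V) (m : ℤ) :
    Dop va (va.Y z m w) = va.Y z m (Dop va w) - m • va.Y z (m - 1) w := by
  have h := iterate_split va z w va.vac m (-2) ⊥ 2 (fun i hi => by
    rw [va.create_nonneg w _ (by omega), va.create_nonneg z _ (by exact_mod_cast Nat.zero_le i)]
    simp)
  rw [Submodule.mem_bot, sub_eq_zero] at h
  have hD : Dop va (va.Y z m w) = va.Y (va.Y z m w) (-2) va.vac := rfl
  rw [hD, h, Finset.sum_range_succ, Finset.sum_range_one]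
  simp only [Nat.cast_zero, Nat.cast_one, pow_zero, pow_one, intBinom_zero, intBinom_one,
    one_mul, add_zero, sub_zero]
  rw [va.create_nonneg z 0 le_rfl, va.create_nonneg z 1 (by norm_num)]
  simp only [map_zero, smul_zero, sub_zero]
  rw [show (-2 : ℤ) + 1 = -1 by norm_num, va.create w, one_smul, neg_one_mul, neg_smul,
    show Dop va w = va.Y w (-2) va.vac from rfl]
  abel
end Aux2
section Aux3

variable {V : Type*} [AddCommGroup V] [Module ℂ V] (va : VertexAlgebra V)

lemma smul_cancel_mem {p : Submodule ℂ V} (z : ℤ) (hz : z ≠ 0) {x : V} (h : z • x ∈ p) :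
    x ∈ p := by
  have h3 := p.smul_mem ((z : ℂ))⁻¹ (by rwa [← Int.cast_smul_eq_zsmul (R := ℂ)] at h)
  rwa [smul_smul, inv_mul_cancel₀ (Int.cast_ne_zero.mpr hz), one_smul] at h3

lemma Y_Dop (z w : V) (j : ℤ) (hj : j ≤ -1) :
    va.Y (Dop va z) j w = (-j) • va.Y z (j - 1) w := by
  have hi₀' : (((-1 - j).toNat : ℕ) : ℤ) = -1 - j := Int.toNat_of_nonneg (by omega)
  set i₀ : ℕ := (-1 - j).toNat
  have h := iterate_split va z va.vac w (-2) j ⊥ (i₀ + 1) (fun i hi => by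
    rw [va.vac_act (j + i) w, if_neg (by omega), va.vac_act, if_neg (by omega)]
    simp)
  rw [Submodule.mem_bot, sub_eq_zero] at h
  rw [show va.Y (Dop va z) j w = va.Y (va.Y z (-2) va.vac) j w from rfl, h]
  rw [Finset.sum_eq_single_of_mem i₀ (Finset.mem_range.mpr (Nat.lt_succ_self _))
    (fun i _ hne => by
      rw [va.vac_act (j + i) w, if_neg (by omega), va.vac_act, if_neg (by omega)]
      simp)]
  rw [va.vac_act (j + i₀) w, if_pos (by omega), va.vac_act, if_neg (by omega),
    smul_zero, sub_zero, intBinom_neg_two]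
  rw [show ((-1:ℤ)^i₀ * ((-1:ℤ)^i₀ * ((i₀ : ℤ) + 1))) = ((i₀ : ℤ) + 1) by
    rw [← mul_assoc, ← mul_pow]; norm_num]
  rw [show (-2 : ℤ) - (i₀ : ℤ) = j - 1 by omega, show ((i₀ : ℤ) + 1) = -j by omega]

lemma Y_vac_mem_DV (z : V) (m : ℤ) (hm : m ≤ -2) : va.Y z m va.vac ∈ DVsub va := by
  have h1 := Dop_Y va z va.vac (m + 1)
  rw [Dop_vac, map_zero, zero_sub, show m + 1 - 1 = m by ring] at h1
  refine smul_cancel_mem (-(m+1)) (by omega) ?_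
  rw [neg_smul, ← h1]
  exact Dop_mem_DV va _

lemma mem_Cn (n : ℕ) (u w : V) : va.Y u (-(n : ℤ)) w ∈ Cfilt va.adjoint n :=
  Submodule.subset_span ⟨u, w, rfl⟩

lemma Cn_succ_le (m : ℕ) (hm : 1 ≤ m) :
    Cfilt va.adjoint (m+1) ≤ Cfilt va.adjoint m := by
  rw [Cfilt, Submodule.span_le]
  rintro x ⟨u, w, rfl⟩
  have h := Y_Dop va u w (-(m:ℤ)) (by omega)
  rw [neg_neg] at h
  show va.Y u (-(((m+1) : ℕ) : ℤ)) w ∈ Cfilt va.adjoint m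
  rw [show (-(((m+1) : ℕ) : ℤ)) = -(m:ℤ) - 1 by push_cast; ring]
  refine smul_cancel_mem (m : ℤ) (by omega) ?_
  rw [← h]
  exact mem_Cn va m (Dop va u) w

lemma Cn_le {n m : ℕ} (h2 : 2 ≤ n) (hnm : n ≤ m) :
    Cfilt va.adjoint m ≤ Cfilt va.adjoint n := by
  induction m, hnm using Nat.le_induction with
  | base => exact le_rfl
  | succ m hm ih => exact le_trans (Cn_succ_le va m (by omega)) ih

lemma mem_Cn_of_le (N : ℕ) (hN : 2 ≤ N) (u w : V) (j : ℤ) (hj : j ≤ -(N:ℤ)) :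
    va.Y u j w ∈ Cfilt va.adjoint N := by
  have h0 : (((-j).toNat : ℕ) : ℤ) = -j := Int.toNat_of_nonneg (by omega)
  rw [show j = -((((-j).toNat : ℕ)) : ℤ) by omega]
  exact Cn_le va hN (by omega) (mem_Cn va _ u w)

end Aux3
section Aux4

variable {V : Type*} [AddCommGroup V] [Module ℂ V] (va : VertexAlgebra V)

lemma csmul_cancel_mem {p : Submodule ℂ V} (c : ℂ) (hc : c ≠ 0) {x : V} (h : c • x ∈ p) :
    x ∈ p := by
  have h3 := p.smul_mem c⁻¹ h
  rwa [smul_smul, inv_mul_cancel₀ hc, one_smul] at h3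

lemma Y_zero_left (m : ℤ) (w : V) : va.Y (0 : V) m w = 0 := by
  rw [map_zero]; rfl

lemma Y_add_left (a b : V) (m : ℤ) (w : V) :
    va.Y (a + b) m w = va.Y a m w + va.Y b m w := by
  rw [map_add]; rfl

lemma Y_smul_left (c : ℂ) (a : V) (m : ℤ) (w : V) :
    va.Y (c • a) m w = c • va.Y a m w := by
  rw [map_smul]; rfl

lemma C_stable (N : ℕ) (hN : 2 ≤ N) (u : V) (m : ℤ) (hm : m ≤ -1) {x : V}
    (hx : x ∈ Cfilt va.adjoint N) : va.Y u m x ∈ Cfilt va.adjoint N := by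
  induction hx using Submodule.span_induction with
  | mem x hxs =>
    obtain ⟨z, y, rfl⟩ := hxs
    show va.Y u m (va.Y z (-(N:ℤ)) y) ∈ Cfilt va.adjoint N
    have hc := commutator_split va u z y m (-(N:ℤ)) (Cfilt va.adjoint N) 0 (fun i _ =>
      zsmul_mem' _ (mem_Cn_of_le va N hN _ _ _ (by omega)))
    rw [Finset.range_zero, Finset.sum_empty, sub_zero] at hc
    have h2 : va.Y z (-(N:ℤ)) (va.Y u m y) ∈ Cfilt va.adjoint N := mem_Cn va N z _
    have h3 := Submodule.add_mem _ hc h2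
    rwa [sub_add_cancel] at h3
  | zero => rw [map_zero]; exact Submodule.zero_mem _
  | add a b _ _ ha hb => rw [map_add]; exact Submodule.add_mem _ ha hb
  | smul c a _ ha => rw [map_smul]; exact Submodule.smul_mem _ _ ha

lemma comm_mod (N : ℕ) (hN : 2 ≤ N) (u v w : V) (m n : ℤ) (hmn : m + n ≤ -(N:ℤ)) :
    va.Y u m (va.Y v n w) - va.Y v n (va.Y u m w) ∈ Cfilt va.adjoint N := by
  have hc := commutator_split va u v w m n (Cfilt va.adjoint N) 0 (fun i _ =>
    zsmul_mem' _ (mem_Cn_of_le va N hN _ _ _ (by omega)))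
  rwa [Finset.range_zero, Finset.sum_empty, sub_zero] at hc

lemma DV_act (n : ℕ) (hn : 1 ≤ n) (w : V) {x : V} (hx : x ∈ DVsub va) :
    va.Y x (-(n:ℤ)) w ∈ Cfilt va.adjoint (n+1) := by
  induction hx using Submodule.span_induction with
  | mem x hxs =>
    obtain ⟨z, rfl⟩ := hxs
    rw [Y_Dop va z w (-(n:ℤ)) (by omega), neg_neg]
    refine zsmul_mem' _ ?_
    rw [show (-(n:ℤ) - 1) = -(((n+1 : ℕ)) : ℤ) by push_cast; ring]
    exact mem_Cn va (n+1) z w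
  | zero => rw [Y_zero_left]; exact Submodule.zero_mem _
  | add a b _ _ ha hb => rw [Y_add_left]; exact Submodule.add_mem _ ha hb
  | smul c a _ ha => rw [Y_smul_left]; exact Submodule.smul_mem _ _ ha

lemma skew_aux1 (u v : V) (m : ℤ) (hm : m ≤ -1) :
    va.Y u m v - va.Y v (-1) (va.Y u m va.vac) ∈ DVsub va := by
  have hc := commutator_split va u v va.vac m (-1) (DVsub va) 0 (fun i _ =>
    zsmul_mem' _ (Y_vac_mem_DV va _ _ (by omega)))
  rwa [Finset.range_zero, Finset.sum_empty, sub_zero, va.create v] at hc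

lemma skew_chain : ∀ (k j : ℕ) (u v : V),
    ((k.factorial * j.factorial : ℕ) : ℂ) • va.Y u (-(j:ℤ)-1) (va.Y v (-(k:ℤ)-1) va.vac)
      - ((-1 : ℂ) ^ k * ((j+k).factorial : ℂ)) • va.Y u (-(j:ℤ)-(k:ℤ)-1) v ∈ DVsub va := by
  intro k
  induction k with
  | zero =>
    intro j u v
    rw [show (-(0:ℕ):ℤ)-1 = -1 by norm_num, va.create v]
    simp only [Nat.factorial_zero, mul_one, add_zero, pow_zero, one_mul, Nat.cast_zero]
    rw [show (-(j:ℤ) - 0 - 1) = -(j:ℤ)-1 by ring, sub_self]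
    exact Submodule.zero_mem _
  | succ k ih =>
    intro j u v
    set y : V := va.Y v (-(k:ℤ)-1) va.vac with hy
    set A : V := va.Y u (-(j:ℤ)-1) (va.Y v (-(k:ℤ)-2) va.vac) with hA
    set B : V := va.Y u (-(j:ℤ)-2) y with hB
    set Cv : V := va.Y u (-(j:ℤ)-(k:ℤ)-2) v with hCv
    -- (i): Dop y = (k+1) • (v_{-k-2} vac)
    have hi : Dop va y = ((k:ℤ)+1) • va.Y v (-(k:ℤ)-2) va.vac := by
      rw [hy, Dop_Y va v va.vac (-(k:ℤ)-1), Dop_vac, map_zero, zero_sub,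
        show (-(k:ℤ)-1-1) = -(k:ℤ)-2 by ring, ← neg_smul]
      congr 1
      ring
    -- (ii): Dop (u_{-j-1} y) = u_{-j-1} (Dop y) + (j+1) • B
    have hii := Dop_Y va u y (-(j:ℤ)-1)
    rw [show (-(j:ℤ)-1-1) = -(j:ℤ)-2 by ring, ← hB] at hii
    -- combine: (k+1) • A + (j+1) • B = Dop (u_{-j-1} y)
    have hF : ((k:ℂ)+1) • A + ((j:ℂ)+1) • B ∈ DVsub va := by
      have : va.Y u (-(j:ℤ)-1) (Dop va y) = ((k:ℤ)+1) • A := by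
        rw [hi, map_zsmul, hA]
      have hnb : ((-(j:ℤ)-1) • B) = -(((j:ℤ)+1) • B) := by
        rw [← neg_smul]; congr 1; ring
      have h4 : Dop va (va.Y u (-(j:ℤ)-1) y)
          = ((k:ℤ)+1) • A + ((j:ℤ)+1) • B := by
        rw [hii, this, hnb, sub_neg_eq_add]
      have h5 : ((k:ℤ)+1) • A + ((j:ℤ)+1) • B ∈ DVsub va := by
        rw [← h4]; exact Dop_mem_DV va _
      rwa [← Int.cast_smul_eq_zsmul ℂ ((k:ℤ)+1), ← Int.cast_smul_eq_zsmul ℂ ((j:ℤ)+1),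
        Int.cast_add, Int.cast_add, Int.cast_natCast, Int.cast_one] at h5
    have hIH := ih (j+1) u v
    rw [show (-((j+1:ℕ)):ℤ)-1 = -(j:ℤ)-2 by push_cast; ring,
      show (-((j+1:ℕ)):ℤ)-(k:ℤ)-1 = -(j:ℤ)-(k:ℤ)-2 by push_cast; ring,
      ← hy, ← hB, ← hCv, show j+1+k = j+k+1 by omega] at hIH
    -- now combine hF and hIH
    have hmem := Submodule.sub_mem _
      (Submodule.smul_mem _ (((k.factorial * j.factorial : ℕ)) : ℂ) hF) hIH
    rw [show (-((k+1:ℕ):ℤ)-1) = -(k:ℤ)-2 by push_cast; ring,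
        show (-(j:ℤ)-((k+1:ℕ):ℤ)-1) = -(j:ℤ)-(k:ℤ)-2 by push_cast; ring,
        show j+(k+1) = j+k+1 by omega, ← hA, ← hCv]
    have heq : (((k+1).factorial * j.factorial : ℕ) : ℂ) • A
        - ((-1:ℂ)^(k+1) * ((j+k+1).factorial : ℂ)) • Cv
        = (((k.factorial * j.factorial : ℕ)) : ℂ) • (((k:ℂ)+1) • A + ((j:ℂ)+1) • B)
          - ((((k.factorial * (j+1).factorial : ℕ))) : ℂ) • B
          + ((-1:ℂ)^k * ((j+k+1).factorial : ℂ)) • Cv := by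
      simp only [Nat.factorial_succ, Nat.cast_mul, Nat.cast_add, Nat.cast_one, pow_succ]
      module
    rw [heq, show (((k.factorial * j.factorial : ℕ)) : ℂ) • (((k:ℂ)+1) • A + ((j:ℂ)+1) • B)
          - ((((k.factorial * (j+1).factorial : ℕ))) : ℂ) • B
          + ((-1:ℂ)^k * ((j+k+1).factorial : ℂ)) • Cv
        = (((k.factorial * j.factorial : ℕ)) : ℂ) • (((k:ℂ)+1) • A + ((j:ℂ)+1) • B)
          - (((((k.factorial * (j+1).factorial : ℕ))) : ℂ) • B
            - ((-1:ℂ)^k * ((j+k+1).factorial : ℂ)) • Cv) from by abel]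
    exact Submodule.sub_mem _ (Submodule.smul_mem _ _ hF) hIH

end Aux4
section Aux5

variable {V : Type*} [AddCommGroup V] [Module ℂ V] (va : VertexAlgebra V)

lemma skew_even (n : ℕ) (hn : 2 ≤ n) (he : Even n) (c d : V) :
    va.Y c (-(n:ℤ)) d + va.Y d (-(n:ℤ)) c ∈ DVsub va := by
  have h1 := skew_aux1 va d c (-(n:ℤ)) (by omega)
  have h2 := skew_chain va (n-1) 0 c d
  rw [show (-((0:ℕ):ℤ))-1 = -1 by norm_num,
      show (-(((n-1:ℕ)):ℤ))-1 = -(n:ℤ) by omega,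
      show (-((0:ℕ):ℤ))-(((n-1:ℕ)):ℤ)-1 = -(n:ℤ) by omega,
      show (0:ℕ)+(n-1) = n-1 by omega] at h2
  have hodd : Odd (n-1) := Nat.Even.sub_odd (by omega) he ⟨0, rfl⟩
  rw [hodd.neg_one_pow, Nat.factorial_zero, Nat.mul_one, neg_one_mul, neg_smul,
    sub_neg_eq_add, ← smul_add] at h2
  have h3 : va.Y c (-1) (va.Y d (-(n:ℤ)) va.vac) + va.Y c (-(n:ℤ)) d ∈ DVsub va :=
    csmul_cancel_mem _ (Nat.cast_ne_zero.mpr (Nat.factorial_ne_zero _)) h2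
  have h4 := Submodule.add_mem _ h1 h3
  rw [show (va.Y d (-(n:ℤ))) c - (va.Y c (-1)) ((va.Y d (-(n:ℤ))) va.vac) +
      ((va.Y c (-1)) ((va.Y d (-(n:ℤ))) va.vac) + (va.Y c (-(n:ℤ))) d)
      = va.Y c (-(n:ℤ)) d + va.Y d (-(n:ℤ)) c from by abel] at h4
  exact h4

lemma it_single (a b N : ℕ) (h2 : 2 ≤ N) (ha : N ≤ a + 1) (hab : N ≤ a + b) (c d w : V) :
    va.Y (va.Y c (-(a:ℤ)) d) (-(b:ℤ)) w - va.Y c (-(a:ℤ)) (va.Y d (-(b:ℤ)) w)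
      ∈ Cfilt va.adjoint N := by
  have h := iterate_split va c d w (-(a:ℤ)) (-(b:ℤ)) (Cfilt va.adjoint N) 1 (fun i hi => by
    refine zsmul_mem' _ (Submodule.sub_mem _ ?_ (zsmul_mem' _ ?_))
    · exact mem_Cn_of_le va N h2 _ _ _ (by push_cast; omega)
    · exact mem_Cn_of_le va N h2 _ _ _ (by push_cast; omega))
  rw [Finset.sum_range_one] at h
  simp only [Nat.cast_zero, pow_zero, intBinom_zero, mul_one, one_smul, sub_zero,
    add_zero] at h
  have hB : (((-1:ℤˣ)^(-(a:ℤ)) : ℤˣ) : ℤ) • va.Y d (-(a:ℤ) + -(b:ℤ)) (va.Y c 0 w)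
      ∈ Cfilt va.adjoint N :=
    zsmul_mem' _ (mem_Cn_of_le va N h2 _ _ _ (by push_cast; omega))
  have heq : va.Y (va.Y c (-(a:ℤ)) d) (-(b:ℤ)) w - va.Y c (-(a:ℤ)) (va.Y d (-(b:ℤ)) w)
      = (va.Y (va.Y c (-(a:ℤ)) d) (-(b:ℤ)) w
        - (va.Y c (-(a:ℤ)) (va.Y d (-(b:ℤ)) w)
          - (((-1:ℤˣ)^(-(a:ℤ)) : ℤˣ) : ℤ) • va.Y d (-(a:ℤ) + -(b:ℤ)) (va.Y c 0 w)))
        - (((-1:ℤˣ)^(-(a:ℤ)) : ℤˣ) : ℤ) • va.Y d (-(a:ℤ) + -(b:ℤ)) (va.Y c 0 w) := by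
    abel
  rw [heq]
  exact Submodule.sub_mem _ h hB

lemma it_double (n : ℕ) (hn : 2 ≤ n) (c d w : V) :
    va.Y (va.Y c (-(n:ℤ)) d) (-(n:ℤ)-1) w
      - va.Y c (-(n:ℤ)) (va.Y d (-(n:ℤ)-1) w)
      - (n:ℤ) • va.Y c (-(n:ℤ)-1) (va.Y d (-(n:ℤ)) w)
      ∈ Cfilt va.adjoint (n+2) := by
  have h := iterate_split va c d w (-(n:ℤ)) (-(n:ℤ)-1) (Cfilt va.adjoint (n+2)) 2
    (fun i hi => by
      refine zsmul_mem' _ (Submodule.sub_mem _ ?_ (zsmul_mem' _ ?_))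
      · exact mem_Cn_of_le va (n+2) (by omega) _ _ _ (by push_cast; omega)
      · exact mem_Cn_of_le va (n+2) (by omega) _ _ _ (by push_cast; omega))
  rw [Finset.sum_range_succ, Finset.sum_range_one] at h
  simp only [Nat.cast_zero, Nat.cast_one, pow_zero, pow_one, intBinom_zero, intBinom_one,
    mul_one, one_smul, sub_zero, add_zero, one_mul, neg_one_mul, neg_neg, neg_smul] at h
  rw [show (-(n:ℤ)-1+1) = -(n:ℤ) by ring] at h
  set s : ℤ := (((-1:ℤˣ)^(-(n:ℤ)) : ℤˣ) : ℤ) with hs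
  set X := va.Y (va.Y c (-(n:ℤ)) d) (-(n:ℤ)-1) w with hX
  set A0 := va.Y c (-(n:ℤ)) (va.Y d (-(n:ℤ)-1) w) with hA0
  set B0 := va.Y d (-(n:ℤ) + (-(n:ℤ)-1)) (va.Y c 0 w) with hB0
  set A1 := va.Y c (-(n:ℤ)-1) (va.Y d (-(n:ℤ)) w) with hA1
  set B1 := va.Y d (-(n:ℤ) + (-(n:ℤ)-1) - 1) (va.Y c 1 w) with hB1
  have hB0m : s • B0 ∈ Cfilt va.adjoint (n+2) :=
    zsmul_mem' _ (mem_Cn_of_le va (n+2) (by omega) _ _ _ (by push_cast; omega))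
  have hB1m : (n:ℤ) • (s • B1) ∈ Cfilt va.adjoint (n+2) :=
    zsmul_mem' _ (zsmul_mem' _ (mem_Cn_of_le va (n+2) (by omega) _ _ _ (by push_cast; omega)))
  have heq : X - A0 - (n:ℤ) • A1
      = (X - ((A0 - s • B0) + (n:ℤ) • (A1 - s • B1))) - s • B0 - (n:ℤ) • (s • B1) := by
    rw [smul_sub]; abel
  rw [heq]
  exact Submodule.sub_mem _ (Submodule.sub_mem _ h hB0m) hB1m

end Aux5
section Aux6

variable {V : Type*} [AddCommGroup V] [Module ℂ V] (va : VertexAlgebra V)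

lemma stepA (n : ℕ) (hn : 2 ≤ n) (he : Even n) (H : Cfilt va.adjoint n = ⊤) :
    Cfilt va.adjoint (n+1) = ⊤ := by
  have key : ∀ c d w : V, va.Y c (-(n:ℤ)) (va.Y d (-(n:ℤ)) w) ∈ Cfilt va.adjoint (n+1) := by
    intro c d w
    have h1 := it_single va n n (n+1) (by omega) (by omega) (by omega) c d w
    have h2 := it_single va n n (n+1) (by omega) (by omega) (by omega) d c w
    have h3 : va.Y (va.Y c (-(n:ℤ)) d + va.Y d (-(n:ℤ)) c) (-(n:ℤ)) w
        ∈ Cfilt va.adjoint (n+1) := by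
      have := DV_act va n (by omega) w (skew_even va n hn he c d)
      rwa [show (-((n:ℕ):ℤ)) = -(n:ℤ) from rfl] at this
    rw [Y_add_left] at h3
    have h4 := Submodule.sub_mem _ h3 (Submodule.add_mem _ h1 h2)
    rw [show (va.Y (va.Y c (-(n:ℤ)) d) (-(n:ℤ)) w + va.Y (va.Y d (-(n:ℤ)) c) (-(n:ℤ)) w)
        - ((va.Y (va.Y c (-(n:ℤ)) d) (-(n:ℤ)) w - va.Y c (-(n:ℤ)) (va.Y d (-(n:ℤ)) w))
           + (va.Y (va.Y d (-(n:ℤ)) c) (-(n:ℤ)) w - va.Y d (-(n:ℤ)) (va.Y c (-(n:ℤ)) w)))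
        = va.Y c (-(n:ℤ)) (va.Y d (-(n:ℤ)) w) + va.Y d (-(n:ℤ)) (va.Y c (-(n:ℤ)) w)
        from by abel] at h4
    have h5 : va.Y c (-(n:ℤ)) (va.Y d (-(n:ℤ)) w) - va.Y d (-(n:ℤ)) (va.Y c (-(n:ℤ)) w)
        ∈ Cfilt va.adjoint (n+1) :=
      comm_mod va (n+1) (by omega) c d w (-(n:ℤ)) (-(n:ℤ)) (by push_cast; omega)
    have h6 := Submodule.add_mem _ h4 h5
    rw [show (va.Y c (-(n:ℤ)) (va.Y d (-(n:ℤ)) w) + va.Y d (-(n:ℤ)) (va.Y c (-(n:ℤ)) w))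
        + (va.Y c (-(n:ℤ)) (va.Y d (-(n:ℤ)) w) - va.Y d (-(n:ℤ)) (va.Y c (-(n:ℤ)) w))
        = (2:ℤ) • va.Y c (-(n:ℤ)) (va.Y d (-(n:ℤ)) w) from by
          rw [two_smul]; abel] at h6
    exact smul_cancel_mem 2 (by norm_num) h6
  have main : ∀ u : V, ∀ w, va.Y u (-(n:ℤ)) w ∈ Cfilt va.adjoint (n+1) := by
    intro u
    have hu : u ∈ Cfilt va.adjoint n := H ▸ Submodule.mem_top
    induction hu using Submodule.span_induction with
    | mem x hxs =>
      obtain ⟨c, d, rfl⟩ := hxs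
      intro w
      show va.Y (va.Y c (-(n:ℤ)) d) (-(n:ℤ)) w ∈ Cfilt va.adjoint (n+1)
      have h1 := it_single va n n (n+1) (by omega) (by omega) (by omega) c d w
      have h2 := key c d w
      have h3 := Submodule.add_mem _ h1 h2
      rwa [sub_add_cancel] at h3
    | zero => intro w; rw [Y_zero_left]; exact Submodule.zero_mem _
    | add a b _ _ ha hb => intro w; rw [Y_add_left]; exact Submodule.add_mem _ (ha w) (hb w)
    | smul r a _ ha => intro w; rw [Y_smul_left]; exact Submodule.smul_mem _ _ (ha w)
  rw [eq_top_iff, ← H, Cfilt, Submodule.span_le]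
  rintro x ⟨u, w, rfl⟩
  exact main u w

end Aux6
section Aux7

variable {V : Type*} [AddCommGroup V] [Module ℂ V] (va : VertexAlgebra V)

lemma F6lem (n : ℕ) (hn : 2 ≤ n) (he : Even n) (c d w : V) :
    va.Y c (-(n:ℤ)) (va.Y d (-(n:ℤ)-1) w) + va.Y d (-(n:ℤ)) (va.Y c (-(n:ℤ)-1) w)
      ∈ Cfilt va.adjoint (n+2) := by
  set a1 := va.Y c (-(n:ℤ)) (va.Y d (-(n:ℤ)-1) w) with ha1
  set a2 := va.Y c (-(n:ℤ)-1) (va.Y d (-(n:ℤ)) w) with ha2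
  set b1 := va.Y d (-(n:ℤ)) (va.Y c (-(n:ℤ)-1) w) with hb1
  set b2 := va.Y d (-(n:ℤ)-1) (va.Y c (-(n:ℤ)) w) with hb2
  set X1 := va.Y (va.Y c (-(n:ℤ)) d) (-(n:ℤ)-1) w with hX1
  set X2 := va.Y (va.Y d (-(n:ℤ)) c) (-(n:ℤ)-1) w with hX2
  have h3 : X1 + X2 ∈ Cfilt va.adjoint (n+2) := by
    have h := DV_act va (n+1) (by omega) w (skew_even va n hn he c d)
    rw [show (-(((n+1:ℕ)):ℤ)) = -(n:ℤ)-1 by push_cast; ring] at h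
    rw [Y_add_left] at h
    exact h
  have h4 := it_double va n hn c d w
  have h5 := it_double va n hn d c w
  rw [← Int.cast_smul_eq_zsmul ℂ, Int.cast_natCast] at h4 h5
  have hc1 := comm_mod va (n+2) (by omega) c d w (-(n:ℤ)-1) (-(n:ℤ)) (by push_cast; omega)
  have hc2 := comm_mod va (n+2) (by omega) d c w (-(n:ℤ)-1) (-(n:ℤ)) (by push_cast; omega)
  have hsum := Submodule.sub_mem _ (Submodule.sub_mem _ (Submodule.sub_mem _
    (Submodule.sub_mem _ h3 h4) h5) (Submodule.smul_mem _ ((n:ℂ)) hc1))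
    (Submodule.smul_mem _ ((n:ℂ)) hc2)
  rw [show (X1 + X2) - (X1 - a1 - (n:ℂ) • a2) - (X2 - b1 - (n:ℂ) • b2)
      - (n:ℂ) • (a2 - b1) - (n:ℂ) • (b2 - a1) = ((n:ℂ)+1) • (a1 + b1) from by module] at hsum
  exact csmul_cancel_mem _ (Nat.cast_add_one_ne_zero n) hsum


lemma B1lem (n : ℕ) (hn : 2 ≤ n) (he : Even n) (c d e w : V) :
    va.Y c (-(n:ℤ)) (va.Y d (-(n:ℤ)-1) (va.Y e (-(n:ℤ)-1) (w))) ∈ Cfilt va.adjoint (n+2) := by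
  set p := Cfilt va.adjoint (n+2) with hp
  have hSsub : ∀ (u : V) {x y : V}, x - y ∈ p →
      va.Y u (-(n:ℤ)) x - va.Y u (-(n:ℤ)) y ∈ p := by
    intro u x y hxy
    have h := C_stable va (n+2) (by omega) u (-(n:ℤ)) (by omega) hxy
    rwa [map_sub] at h
  have F2 : ∀ a b x : V, va.Y a (-(n:ℤ)-1) (va.Y b (-(n:ℤ)-1) x)
      - va.Y b (-(n:ℤ)-1) (va.Y a (-(n:ℤ)-1) x) ∈ p := fun a b x =>
    comm_mod va (n+2) (by omega) a b x (-(n:ℤ)-1) (-(n:ℤ)-1) (by push_cast; omega)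
  have t1 := F6lem va n hn he c d (va.Y e (-(n:ℤ)-1) (w))
  have t2 := hSsub d (F2 c e w)
  have t3 := F6lem va n hn he d e (va.Y c (-(n:ℤ)-1) (w))
  have t4 := hSsub e (F2 d c w)
  have t5 := F6lem va n hn he e c (va.Y d (-(n:ℤ)-1) (w))
  have t6 := hSsub c (F2 e d w)
  have hAA := Submodule.sub_mem _ (Submodule.add_mem _ (Submodule.add_mem _
    (Submodule.sub_mem _ (Submodule.sub_mem _ t1 t2) t3) t4) t5) t6
  rw [show (va.Y c (-(n:ℤ)) (va.Y d (-(n:ℤ)-1) (va.Y e (-(n:ℤ)-1) (w))) + va.Y d (-(n:ℤ)) (va.Y c (-(n:ℤ)-1) (va.Y e (-(n:ℤ)-1) (w))))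
      - (va.Y d (-(n:ℤ)) (va.Y c (-(n:ℤ)-1) (va.Y e (-(n:ℤ)-1) (w))) - va.Y d (-(n:ℤ)) (va.Y e (-(n:ℤ)-1) (va.Y c (-(n:ℤ)-1) (w))))
      - (va.Y d (-(n:ℤ)) (va.Y e (-(n:ℤ)-1) (va.Y c (-(n:ℤ)-1) (w))) + va.Y e (-(n:ℤ)) (va.Y d (-(n:ℤ)-1) (va.Y c (-(n:ℤ)-1) (w))))
      + (va.Y e (-(n:ℤ)) (va.Y d (-(n:ℤ)-1) (va.Y c (-(n:ℤ)-1) (w))) - va.Y e (-(n:ℤ)) (va.Y c (-(n:ℤ)-1) (va.Y d (-(n:ℤ)-1) (w))))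
      + (va.Y e (-(n:ℤ)) (va.Y c (-(n:ℤ)-1) (va.Y d (-(n:ℤ)-1) (w))) + va.Y c (-(n:ℤ)) (va.Y e (-(n:ℤ)-1) (va.Y d (-(n:ℤ)-1) (w))))
      - (va.Y c (-(n:ℤ)) (va.Y e (-(n:ℤ)-1) (va.Y d (-(n:ℤ)-1) (w))) - va.Y c (-(n:ℤ)) (va.Y d (-(n:ℤ)-1) (va.Y e (-(n:ℤ)-1) (w))))
      = (2:ℤ) • (va.Y c (-(n:ℤ)) (va.Y d (-(n:ℤ)-1) (va.Y e (-(n:ℤ)-1) (w)))) from by rw [two_smul]; abel] at hAA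
  exact smul_cancel_mem 2 (by norm_num) hAA

end Aux7
section Aux8

variable {V : Type*} [AddCommGroup V] [Module ℂ V] (va : VertexAlgebra V)

lemma stepB (n : ℕ) (hn : 2 ≤ n) (he : Even n) (H : Cfilt va.adjoint n = ⊤)
    (H1 : Cfilt va.adjoint (n+1) = ⊤) : Cfilt va.adjoint (n+2) = ⊤ := by
  have B2 : ∀ c d : V, ∀ w, va.Y c (-(n:ℤ)) (va.Y d (-(n:ℤ)-1) w) ∈ Cfilt va.adjoint (n+2) := by
    intro c d
    have hd : d ∈ Cfilt va.adjoint (n+1) := H1 ▸ Submodule.mem_top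
    induction hd using Submodule.span_induction with
    | mem x hxs =>
      obtain ⟨e, f, rfl⟩ := hxs
      intro w
      show va.Y c (-(n:ℤ)) (va.Y (va.Y e (-(((n+1:ℕ)):ℤ)) f) (-(n:ℤ)-1) w)
        ∈ Cfilt va.adjoint (n+2)
      rw [show (-(((n+1:ℕ)):ℤ)) = -(n:ℤ)-1 by push_cast; ring]
      have hit := it_single va (n+1) (n+1) (n+2) (by omega) (by omega) (by omega) e f w
      rw [show (-(((n+1:ℕ)):ℤ)) = -(n:ℤ)-1 by push_cast; ring] at hit
      have h1 : va.Y c (-(n:ℤ)) (va.Y (va.Y e (-(n:ℤ)-1) f) (-(n:ℤ)-1) w)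
          - va.Y c (-(n:ℤ)) (va.Y e (-(n:ℤ)-1) (va.Y f (-(n:ℤ)-1) w))
          ∈ Cfilt va.adjoint (n+2) := by
        have h := C_stable va (n+2) (by omega) c (-(n:ℤ)) (by omega) hit
        rwa [map_sub] at h
      have h2 := B1lem va n hn he c e f w
      have h3 := Submodule.add_mem _ h1 h2
      rwa [sub_add_cancel] at h3
    | zero => intro w; rw [Y_zero_left, map_zero]; exact Submodule.zero_mem _
    | add a b _ _ ha hb =>
      intro w; rw [Y_add_left, map_add]; exact Submodule.add_mem _ (ha w) (hb w)
    | smul r a _ ha =>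
      intro w; rw [Y_smul_left, map_smul]; exact Submodule.smul_mem _ _ (ha w)
  have B3 : ∀ x : V, ∀ w, va.Y x (-(n:ℤ)-1) w ∈ Cfilt va.adjoint (n+2) := by
    intro x
    have hx : x ∈ Cfilt va.adjoint n := H ▸ Submodule.mem_top
    induction hx using Submodule.span_induction with
    | mem x hxs =>
      obtain ⟨c, d, rfl⟩ := hxs
      intro w
      show va.Y (va.Y c (-(n:ℤ)) d) (-(n:ℤ)-1) w ∈ Cfilt va.adjoint (n+2)
      have h4 := it_double va n hn c d w
      have hTS : va.Y c (-(n:ℤ)-1) (va.Y d (-(n:ℤ)) w) ∈ Cfilt va.adjoint (n+2) := by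
        have hcm := comm_mod va (n+2) (by omega) c d w (-(n:ℤ)-1) (-(n:ℤ))
          (by push_cast; omega)
        have h5 := Submodule.add_mem _ hcm (B2 d c w)
        rwa [sub_add_cancel] at h5
      have h6 := Submodule.add_mem _ (Submodule.add_mem _ h4 (zsmul_mem' (n:ℤ) hTS))
        (B2 c d w)
      rwa [show va.Y (va.Y c (-(n:ℤ)) d) (-(n:ℤ)-1) w
          - va.Y c (-(n:ℤ)) (va.Y d (-(n:ℤ)-1) w)
          - (n:ℤ) • va.Y c (-(n:ℤ)-1) (va.Y d (-(n:ℤ)) w)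
          + (n:ℤ) • va.Y c (-(n:ℤ)-1) (va.Y d (-(n:ℤ)) w)
          + va.Y c (-(n:ℤ)) (va.Y d (-(n:ℤ)-1) w)
          = va.Y (va.Y c (-(n:ℤ)) d) (-(n:ℤ)-1) w from by abel] at h6
    | zero => intro w; rw [Y_zero_left]; exact Submodule.zero_mem _
    | add a b _ _ ha hb =>
      intro w; rw [Y_add_left]; exact Submodule.add_mem _ (ha w) (hb w)
    | smul r a _ ha =>
      intro w; rw [Y_smul_left]; exact Submodule.smul_mem _ _ (ha w)
  rw [eq_top_iff, ← H1, Cfilt, Submodule.span_le]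
  rintro x ⟨u, w, rfl⟩
  show va.Y u (-(((n+1:ℕ)):ℤ)) w ∈ Cfilt va.adjoint (n+2)
  rw [show (-(((n+1:ℕ)):ℤ)) = -(n:ℤ)-1 by push_cast; ring]
  exact B3 u w

lemma allC (h2 : Cfilt va.adjoint 2 = ⊤) : ∀ k : ℕ, Cfilt va.adjoint (2*k+2) = ⊤ := by
  intro k
  induction k with
  | zero => simpa using h2
  | succ k ih =>
    have he : Even (2*k+2) := ⟨k+1, by ring⟩
    have hA := stepA va (2*k+2) (by omega) he ih
    have hB := stepB va (2*k+2) (by omega) he ih hA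
    rw [show 2*(k+1)+2 = (2*k+2)+2 by ring]
    exact hB

end Aux8
/-- **Proposition 3.12 (pnonexistence).** Let `V` be a nonzero vertex algebra with
`C₂(V) = V`. Then there is no lower truncated `ℤ`-grading on `V` making `V` a
`ℤ`-graded vertex algebra. -/
theorem stmt12 {V : Type*} [AddCommGroup V] [Module ℂ V] [Nontrivial V]
    (va : VertexAlgebra V) (h2 : Cfilt va.adjoint 2 = ⊤) :
    ¬ ∃ (g : ℤ → Submodule ℂ V) (t : ℤ),
        (∀ n : ℤ, n < t → g n = ⊥) ∧ DirectSum.IsInternal g ∧ va.vac ∈ g 0 ∧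
        (∀ (k m n : ℤ) (u v : V), u ∈ g k → v ∈ g n →
          va.Y u m v ∈ g (n + k - m - 1)) := by
  classical
  rintro ⟨g, t, hlow, hint, _hvac, hgr⟩
  set e := LinearEquiv.ofBijective (DirectSum.coeLinearMap g) hint with he
  have hdecomp : ∀ x : V, x = ∑ i ∈ DFinsupp.support (e.symm x), ((e.symm x) i : V) := by
    intro x
    calc x = e (e.symm x) := (e.apply_symm_apply x).symm
    _ = DirectSum.coeLinearMap g (e.symm x) := rfl
    _ = DirectSum.coeLinearMap g
        (∑ i ∈ DFinsupp.support (e.symm x), DirectSum.of (fun i => g i) i ((e.symm x) i)) := by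
        rw [DirectSum.sum_support_of]
    _ = ∑ i ∈ DFinsupp.support (e.symm x), ((e.symm x) i : V) := by
        rw [map_sum]
        exact Finset.sum_congr rfl fun i _ => DirectSum.coeLinearMap_of g i _
  obtain ⟨v, hv⟩ := exists_ne (0 : V)
  have hsymm : e.symm v ≠ 0 := fun h => hv (e.symm.map_eq_zero_iff.mp h)
  obtain ⟨d, hd⟩ : ∃ d : ℤ, (e.symm v) d ≠ 0 := by
    by_contra hc
    push_neg at hc
    exact hsymm (DFinsupp.ext hc)
  obtain ⟨k, hk⟩ : ∃ k : ℕ, d < 2*t + ((2*k+2 : ℕ) : ℤ) - 1 :=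
    ⟨(d + 1 - 2*t).toNat, by push_cast; omega⟩
  set n : ℕ := 2*k+2 with hn
  set M : ℤ := 2*t + (n : ℤ) - 1 with hM
  have hCn : Cfilt va.adjoint n = ⊤ := allC va h2 k
  have hK : Cfilt va.adjoint n ≤ ⨆ (m : ℤ) (_ : M ≤ m), g m := by
    rw [Cfilt, Submodule.span_le]
    rintro x ⟨u, w, rfl⟩
    show va.Y u (-(n:ℤ)) w ∈ (⨆ (m : ℤ) (_ : M ≤ m), g m)
    have expand : va.Y u (-(n:ℤ)) w
        = ∑ i ∈ DFinsupp.support (e.symm u), ∑ j ∈ DFinsupp.support (e.symm w),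
            va.Y ((e.symm u) i : V) (-(n:ℤ)) ((e.symm w) j : V) := by
      conv_lhs => rw [hdecomp u, hdecomp w]
      rw [map_sum]
      have hsw : ∀ j : ℤ,
          (va.Y (∑ i ∈ DFinsupp.support (e.symm u), ((e.symm u) i : V)) (-(n:ℤ)))
            ((e.symm w) j : V)
          = ∑ i ∈ DFinsupp.support (e.symm u),
              va.Y ((e.symm u) i : V) (-(n:ℤ)) ((e.symm w) j : V) := fun j => by
        rw [map_sum, Finset.sum_apply, LinearMap.sum_apply]
      rw [Finset.sum_congr rfl (fun j _ => hsw j), Finset.sum_comm]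
    rw [expand]
    refine Submodule.sum_mem _ fun i _ => Submodule.sum_mem _ fun j _ => ?_
    by_cases hi : i < t
    · have hzero : ((e.symm u) i : V) = 0 :=
        (Submodule.eq_bot_iff _).mp (hlow i hi) _ ((e.symm u) i).2
      rw [hzero, Y_zero_left]
      exact Submodule.zero_mem _
    · by_cases hj : j < t
      · have hzero : ((e.symm w) j : V) = 0 :=
          (Submodule.eq_bot_iff _).mp (hlow j hj) _ ((e.symm w) j).2
        rw [hzero, map_zero]
        exact Submodule.zero_mem _
      · have hmem := hgr i (-(n:ℤ)) j ((e.symm u) i : V) ((e.symm w) j : V)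
          ((e.symm u) i).2 ((e.symm w) j).2
        refine Submodule.mem_iSup_of_mem (j + i - -(n:ℤ) - 1) ?_
        refine Submodule.mem_iSup_of_mem ?_ hmem
        omega
  have hq : (⨆ (m : ℤ) (_ : M ≤ m), g m) ≤ Submodule.comap (e.symm : V →ₗ[ℂ] _)
      (LinearMap.ker (DirectSum.component ℂ ℤ (fun i => g i) d)) := by
    refine iSup₂_le fun m hm => ?_
    intro x hx
    simp only [Submodule.mem_comap, LinearMap.mem_ker]
    show (e.symm x) d = 0
    exact hint.ofBijective_coeLinearMap_of_mem_ne (show m ≠ d by omega) hx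
  have hvmem : v ∈ Cfilt va.adjoint n := hCn ▸ Submodule.mem_top
  have := hq (hK hvmem)
  simp only [Submodule.mem_comap, LinearMap.mem_ker] at this
  exact hd this

end
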